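/- Let u ⊆ {1,...,N} and let z be a real number with |z| · max{|λ_j| : j=1,...,N} < 1. Then I − zA is invertible and the minor of the resolvent satisfies det(((I − zA)^{−1})_{uu}) = ∑_{σ∈S_N} ε(σ) (∏_{j=1}^N p_{jσ(j)}) ∏_{i∈u} (1 − zλ_{σ(i)})^{−1}; that is, it equals the homogeneous moment generating function of the joint spectral measure on the coordinates in u. -/

import Mathlib

/-!
Write `I - zA = P D Pᵀ` with `D = diag(1 - zλ)`, so that the resolvent is `P D⁻¹ Pᵀ`. Its
principal `u`-minor is the determinant of the matrix whose rows in `u` are those of `P D⁻¹ Pᵀ`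
and whose other rows are those of `I = P Pᵀ`. That matrix is `B Pᵀ`, where `B` has the rows of
`P D⁻¹` in `u` and those of `P` elsewhere; as `det Pᵀ = 1`, the Leibniz expansion of `det B`
is the stated sum.
-/

namespace Matrix

variable {ι R : Type*} [DecidableEq ι] [CommRing R]

def piecewiseRows {κ : Type*} (u : Finset ι) (X Y : Matrix ι κ R) : Matrix ι κ R :=
  of fun i => if i ∈ u then X i else Y i

theorem piecewiseRows_mul {κ ν : Type*} [Fintype κ] (u : Finset ι) (X Y : Matrix ι κ R)
    (Z : Matrix κ ν R) : piecewiseRows u X Y * Z = piecewiseRows u (X * Z) (Y * Z) := by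
  ext i j
  by_cases hi : i ∈ u <;> simp [piecewiseRows, mul_apply, hi]

variable [Fintype ι]

theorem det_piecewiseRows_one (u : Finset ι) (M : Matrix ι ι R) :
    (piecewiseRows u M 1).det = (M.submatrix ((↑) : u → ι) ((↑) : u → ι)).det := by
  let e : u ⊕ {i // i ∉ u} ≃ ι := Equiv.sumCompl (· ∈ u)
  have hblocks : (piecewiseRows u M 1).submatrix e e =
      fromBlocks (M.submatrix (↑) (↑)) (M.submatrix (↑) (↑)) 0 1 := by
    ext (i | i) (j | j)
    · simp [e, piecewiseRows, i.2]
    · simp [e, piecewiseRows, i.2]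
    · simp [e, piecewiseRows, i.2, (ne_of_mem_of_not_mem j.2 i.2).symm]
    · simp [e, piecewiseRows, i.2, one_apply, Subtype.ext_iff]
  rw [← det_submatrix_equiv_self e, hblocks, det_fromBlocks_zero₂₁, det_one, mul_one]

theorem det_piecewiseRows_mul_diagonal (u : Finset ι) (P : Matrix ι ι R) (w : ι → R) :
    (piecewiseRows u (P * diagonal w) P).det =
      ∑ σ : Equiv.Perm ι, ((Equiv.Perm.sign σ : ℤ) : R) * (∏ j, P j (σ j)) * ∏ i ∈ u, w (σ i) := by
  rw [← det_transpose, det_apply']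
  refine Finset.sum_congr rfl fun σ _ => ?_
  have hentry : ∀ i, (piecewiseRows u (P * diagonal w) P)ᵀ (σ i) i =
      P i (σ i) * if i ∈ u then w (σ i) else 1 := by
    intro i
    by_cases hi : i ∈ u <;> simp [piecewiseRows, hi]
  simp only [hentry, Finset.prod_mul_distrib, Finset.prod_ite_mem, Finset.univ_inter, mul_assoc]

theorem det_submatrix_mul_diagonal_mul_transpose (u : Finset ι) {P : Matrix ι ι R}
    (horth : P * Pᵀ = 1) (hdet : P.det = 1) (w : ι → R) :
    ((P * diagonal w * Pᵀ).submatrix ((↑) : u → ι) ((↑) : u → ι)).det =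
      ∑ σ : Equiv.Perm ι, ((Equiv.Perm.sign σ : ℤ) : R) * (∏ j, P j (σ j)) * ∏ i ∈ u, w (σ i) := by
  rw [← det_piecewiseRows_one, ← horth, ← piecewiseRows_mul, det_mul, det_transpose, hdet,
    mul_one, det_piecewiseRows_mul_diagonal]

variable {P Q : Matrix ι ι R}

theorem one_sub_smul_mul_diagonal_mul (hPQ : P * Q = 1) (z : R) (v : ι → R) :
    1 - z • (P * diagonal v * Q) = P * diagonal (fun j => 1 - z * v j) * Q := by
  have hdiag : diagonal (fun j => 1 - z * v j) = 1 - z • diagonal v := by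
    ext i j
    by_cases h : i = j <;> simp [h]
  rw [hdiag, Matrix.mul_sub, Matrix.sub_mul, Matrix.mul_one, hPQ, Matrix.mul_smul,
    Matrix.smul_mul]

theorem inv_mul_diagonal_mul (hPQ : P * Q = 1) {d d' : ι → R} (hd : d * d' = 1) :
    (P * diagonal d * Q)⁻¹ = P * diagonal d' * Q := by
  refine inv_eq_right_inv ?_
  calc P * diagonal d * Q * (P * diagonal d' * Q)
      = P * diagonal d * (Q * P) * diagonal d' * Q := by simp only [Matrix.mul_assoc]
    _ = 1 := by rw [mul_eq_one_comm.mp hPQ, Matrix.mul_one, Matrix.mul_assoc P,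
        diagonal_mul_diagonal', ← Pi.mul_def, hd, Pi.one_def, diagonal_one, Matrix.mul_one, hPQ]

end Matrix

open Matrix

theorem det_resolvent_block_eq_mgf_general (N : ℕ)
    (A P : Matrix (Fin N) (Fin N) ℝ) (lam : Fin N → ℝ)
    (hdecomp : A = P * Matrix.diagonal lam * Pᵀ)
    (horth : P * Pᵀ = 1)
    (hdet : P.det = 1)
    (u : Finset (Fin N)) (z : ℝ)
    (hz : ∀ j : Fin N, |z| * |lam j| < 1) :
    IsUnit ((1 : Matrix (Fin N) (Fin N) ℝ) - z • A).det ∧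
    Matrix.det ((((1 : Matrix (Fin N) (Fin N) ℝ) - z • A)⁻¹).submatrix
        (fun i : {i // i ∈ u} => (i : Fin N)) (fun i : {i // i ∈ u} => (i : Fin N)))
      = ∑ σ : Equiv.Perm (Fin N),
          ((Equiv.Perm.sign σ : ℤ) : ℝ) * (∏ j : Fin N, P j (σ j)) *
            ∏ i ∈ u, (1 - z * lam (σ i))⁻¹ := by
  set d : Fin N → ℝ := fun j => 1 - z * lam j
  have hd : ∀ j, d j ≠ 0 := fun j =>
    (sub_pos.mpr ((le_abs_self _).trans_lt (by rw [abs_mul]; exact hz j))).ne'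
  have hfactor : 1 - z • A = P * diagonal d * Pᵀ := by
    rw [hdecomp, one_sub_smul_mul_diagonal_mul horth]
  refine ⟨?_, ?_⟩
  · rw [hfactor, det_mul, det_mul, det_transpose, hdet, det_diagonal, one_mul, mul_one]
    exact isUnit_iff_ne_zero.mpr (Finset.prod_ne_zero_iff.mpr fun j _ => hd j)
  · rw [hfactor,
      inv_mul_diagonal_mul horth (d' := d⁻¹) (funext fun j => mul_inv_cancel₀ (hd j))]
    exact det_submatrix_mul_diagonal_mul_transpose u horth hdet _

/-- For `|z| max|λ_j| < 1`, the matrix `I − zA` is invertible and the minor of the resolvent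
is the homogeneous moment generating function of the joint spectral measure:
`det(((I − zA)^{-1})_{uu}) = ∑_σ ε(σ)(∏_j p_{jσ(j)}) ∏_{i∈u} (1 − zλ_{σ(i)})^{-1}`. -/
theorem det_resolvent_block_eq_mgf (N : ℕ)
    (A P : Matrix (Fin N) (Fin N) ℝ) (lam : Fin N → ℝ)
    (hsymm : A.IsSymm)
    (hdecomp : A = P * Matrix.diagonal lam * Pᵀ)
    (horth : P * Pᵀ = 1)
    (hdet : P.det = 1)
    (u : Finset (Fin N)) (z : ℝ)
    (hz : ∀ j : Fin N, |z| * |lam j| < 1) :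
    IsUnit ((1 : Matrix (Fin N) (Fin N) ℝ) - z • A).det ∧
    Matrix.det ((((1 : Matrix (Fin N) (Fin N) ℝ) - z • A)⁻¹).submatrix
        (fun i : {i // i ∈ u} => (i : Fin N)) (fun i : {i // i ∈ u} => (i : Fin N)))
      = ∑ σ : Equiv.Perm (Fin N),
          ((Equiv.Perm.sign σ : ℤ) : ℝ) * (∏ j : Fin N, P j (σ j)) *
            ∏ i ∈ u, (1 - z * lam (σ i))⁻¹ :=
  det_resolvent_block_eq_mgf_general N A P lam hdecomp horth hdet u z hz
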